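/- arXiv:0704.0708 — 2 statements merged into one kernel-verified Lean document; each statement's English description precedes it below -/
import Mathlib

section
/- Let Ω₀ ⊆ ℝ^d be open, let u : ℝ^d → ℝ be three times continuously differentiable and harmonic on Ω₀ (Δu = 0 on Ω₀), and let h : ℝ^d → ℝ^d be a twice continuously differentiable vector field. Then for every x ∈ Ω₀, div(y ↦ A_h(y) ∇u(y))(x) = Δ(y ↦ ⟨h(y), ∇u(y)⟩)(x). -/
/-! Since the Hessian of `u` is symmetric, `∇⟨h, ∇u⟩ = (Dh)ᵀ∇u + D²u h`, so the field splits as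
`A_h ∇u = ∇⟨h, ∇u⟩ + [∇u, h] − (div h) ∇u` with the Lie bracket `[∇u, h] = Dh ∇u − D²u h`.
For `C²` fields `div [V, W] = D(div W) V − D(div V) W`: the terms `tr(DW DV)` and `tr(DV DW)`
cancel. Hence `div (A_h ∇u) = Δ⟨h, ∇u⟩ − D(Δu) h − (div h) Δu`, and both `Δu` and `D(Δu)` vanish
on the open set where `u` is harmonic. -/

open scoped RealInnerProductSpace

noncomputable section

abbrev E (d : ℕ) := EuclideanSpace ℝ (Fin d)

/-- Divergence of a vector field: trace of its Jacobian (Fréchet derivative). -/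
def vdiv {d : ℕ} (V : E d → E d) (x : E d) : ℝ :=
  LinearMap.trace ℝ (E d) (fderiv ℝ V x).toLinearMap

/-- Laplacian `Δf = div(∇f)`. -/
def lap {d : ℕ} (f : E d → ℝ) (x : E d) : ℝ :=
  vdiv (fun y => gradient f y) x

/-- `A_h(x) = Dh(x) + Dh(x)ᵀ − (div h(x)) I`. -/
def Amat {d : ℕ} (h : E d → E d) (x : E d) : E d →L[ℝ] E d :=
  fderiv ℝ h x + ContinuousLinearMap.adjoint (fderiv ℝ h x) -
    vdiv h x • ContinuousLinearMap.id ℝ (E d)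

open VectorField InnerProductSpace

lemma ContDiffAt.differentiableAt_fderiv {F G : Type*} [NormedAddCommGroup F] [NormedSpace ℝ F]
    [NormedAddCommGroup G] [NormedSpace ℝ G] {f : F → G} {x : F} (hf : ContDiffAt ℝ 2 f x) :
    DifferentiableAt ℝ (fderiv ℝ f) x :=
  (hf.fderiv_right (m := 1) le_rfl).differentiableAt one_ne_zero

def traceCLM (F : Type*) [NormedAddCommGroup F] [NormedSpace ℝ F] [FiniteDimensional ℝ F] :
    (F →L[ℝ] F) →L[ℝ] ℝ :=
  LinearMap.toContinuousLinearMap (LinearMap.trace ℝ F ∘ₗ ContinuousLinearMap.coeLM ℝ)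

section Divergence

variable {d : ℕ} {V W : E d → E d} {x : E d}

lemma vdiv_add (hV : DifferentiableAt ℝ V x) (hW : DifferentiableAt ℝ W x) :
    vdiv (fun y => V y + W y) x = vdiv V x + vdiv W x := by
  rw [vdiv, fderiv_fun_add hV hW, ContinuousLinearMap.toLinearMap_add, map_add, vdiv, vdiv]

lemma vdiv_sub (hV : DifferentiableAt ℝ V x) (hW : DifferentiableAt ℝ W x) :
    vdiv (fun y => V y - W y) x = vdiv V x - vdiv W x := by
  rw [vdiv, fderiv_fun_sub hV hW, ContinuousLinearMap.toLinearMap_sub, map_sub, vdiv, vdiv]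

lemma vdiv_smul {f : E d → ℝ} (hf : DifferentiableAt ℝ f x) (hV : DifferentiableAt ℝ V x) :
    vdiv (fun y => f y • V y) x = f x * vdiv V x + fderiv ℝ f x (V x) := by
  rw [vdiv, fderiv_fun_smul hf hV, ContinuousLinearMap.toLinearMap_add,
    ContinuousLinearMap.toLinearMap_smul, map_add, map_smul, smul_eq_mul, vdiv]
  congr 1
  exact LinearMap.trace_smulRight _ _

lemma hasFDerivAt_vdiv (hV : DifferentiableAt ℝ (fderiv ℝ V) x) :
    HasFDerivAt (vdiv V) ((traceCLM (E d)).comp (fderiv ℝ (fderiv ℝ V) x)) x :=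
  (traceCLM (E d)).hasFDerivAt.comp x hV.hasFDerivAt

lemma fderiv_vdiv_apply (hV : DifferentiableAt ℝ (fderiv ℝ V) x) (w : E d) :
    fderiv ℝ (vdiv V) x w = LinearMap.trace ℝ (E d) (fderiv ℝ (fderiv ℝ V) x w).toLinearMap := by
  rw [(hasFDerivAt_vdiv hV).fderiv]
  rfl

lemma vdiv_fderiv_apply (hV : ContDiffAt ℝ 2 V x) (hW : DifferentiableAt ℝ W x) :
    vdiv (fun y => fderiv ℝ V y (W y)) x =
      fderiv ℝ (vdiv V) x (W x) +
        LinearMap.trace ℝ (E d) ((fderiv ℝ V x).comp (fderiv ℝ W x)).toLinearMap := by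
  have hV' := hV.differentiableAt_fderiv
  have hsymm : (fderiv ℝ (fderiv ℝ V) x).flip (W x) = fderiv ℝ (fderiv ℝ V) x (W x) :=
    ContinuousLinearMap.ext fun v => hV.isSymmSndFDerivAt (by simp) v (W x)
  rw [vdiv, fderiv_clm_apply hV' hW, ContinuousLinearMap.toLinearMap_add, map_add, hsymm,
    fderiv_vdiv_apply hV', add_comm]

lemma vdiv_lieBracket (hV : ContDiffAt ℝ 2 V x) (hW : ContDiffAt ℝ 2 W x) :
    vdiv (lieBracket ℝ V W) x = fderiv ℝ (vdiv W) x (V x) - fderiv ℝ (vdiv V) x (W x) := by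
  have hV₁ := hV.differentiableAt two_ne_zero
  have hW₁ := hW.differentiableAt two_ne_zero
  rw [lieBracket_eq, vdiv_sub (hW.differentiableAt_fderiv.clm_apply hV₁)
      (hV.differentiableAt_fderiv.clm_apply hW₁),
    vdiv_fderiv_apply hW hV₁, vdiv_fderiv_apply hV hW₁, ContinuousLinearMap.toLinearMap_comp,
    ContinuousLinearMap.toLinearMap_comp, LinearMap.trace_comp_comm']
  ring

end Divergence

section Gradient

variable {F : Type*} [NormedAddCommGroup F] [InnerProductSpace ℝ F] [CompleteSpace F]
  {u : F → ℝ} {y : F}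

lemma ContDiff.gradient {n m : WithTop ℕ∞} (hu : ContDiff ℝ n u) (hmn : m + 1 ≤ n) :
    ContDiff ℝ m (gradient u) :=
  (toDual ℝ F).symm.contDiff.comp (hu.fderiv_right hmn)

lemma differentiableAt_gradient (hu : DifferentiableAt ℝ (fderiv ℝ u) y) :
    DifferentiableAt ℝ (gradient u) y :=
  ((toDual ℝ F).symm.hasFDerivAt.comp y hu.hasFDerivAt).differentiableAt

lemma inner_fderiv_gradient_apply (hu : DifferentiableAt ℝ (fderiv ℝ u) y) (v w : F) :
    ⟪fderiv ℝ (gradient u) y v, w⟫ = fderiv ℝ (fderiv ℝ u) y v w := by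
  have hgrad := (toDual ℝ F).symm.hasFDerivAt.comp y hu.hasFDerivAt
  rw [show gradient u = (toDual ℝ F).symm ∘ fderiv ℝ u from rfl, hgrad.fderiv]
  exact toDual_symm_apply

lemma isSelfAdjoint_fderiv_gradient (hu : ContDiffAt ℝ 2 u y) :
    IsSelfAdjoint (fderiv ℝ (gradient u) y) := by
  refine ((ContinuousLinearMap.eq_adjoint_iff (fderiv ℝ (gradient u) y) _).mpr
    fun v w => ?_).symm
  rw [inner_fderiv_gradient_apply hu.differentiableAt_fderiv, real_inner_comm,
    inner_fderiv_gradient_apply hu.differentiableAt_fderiv, hu.isSymmSndFDerivAt (by simp)]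

lemma gradient_inner {f g : F → F} (hf : DifferentiableAt ℝ f y) (hg : DifferentiableAt ℝ g y) :
    gradient (fun z => ⟪f z, g z⟫) y =
      ContinuousLinearMap.adjoint (fderiv ℝ f y) (g y) +
        ContinuousLinearMap.adjoint (fderiv ℝ g y) (f y) := by
  refine ext_inner_right ℝ fun v => ?_
  rw [gradient, toDual_symm_apply, fderiv_inner_apply ℝ hf hg, inner_add_left,
    ContinuousLinearMap.adjoint_inner_left, ContinuousLinearMap.adjoint_inner_left,
    real_inner_comm (g y), add_comm]

end Gradient

lemma Amat_apply_gradient {d : ℕ} {h : E d → E d} {u : E d → ℝ} {y : E d}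
    (hh : DifferentiableAt ℝ h y) (hu : ContDiffAt ℝ 2 u y) :
    Amat h y (gradient u y) =
      gradient (fun z => ⟪h z, gradient u z⟫) y + lieBracket ℝ (gradient u) h y -
        vdiv h y • gradient u y := by
  rw [gradient_inner hh (differentiableAt_gradient hu.differentiableAt_fderiv),
    (isSelfAdjoint_fderiv_gradient hu).adjoint_eq, lieBracket]
  simp only [Amat, sub_apply, add_apply, smul_apply, ContinuousLinearMap.id_apply]
  abel

theorem statement2 {d : ℕ} (Ω₀ : Set (E d)) (hΩ : IsOpen Ω₀)
    (u : E d → ℝ) (h : E d → E d)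
    (hu : ContDiff ℝ 3 u) (hh : ContDiff ℝ 2 h)
    (harm : ∀ y ∈ Ω₀, lap u y = 0)
    (x : E d) (hx : x ∈ Ω₀) :
    vdiv (fun y => Amat h y (gradient u y)) x =
      lap (fun y => ⟪h y, gradient u y⟫) x := by
  have hg : ContDiff ℝ 2 (gradient u) := hu.gradient (by norm_num)
  have hgx : DifferentiableAt ℝ (gradient u) x := hg.differentiable (by norm_num) x
  have hgradF : DifferentiableAt ℝ (gradient fun y => ⟪h y, gradient u y⟫) x :=
    ((hh.inner ℝ hg).gradient (m := 1) le_rfl).differentiable one_ne_zero x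
  have hlie : DifferentiableAt ℝ (lieBracket ℝ (gradient u) h) x :=
    (hg.lieBracket_vectorField hh (m := 1) le_rfl).differentiable one_ne_zero x
  have hdivh : DifferentiableAt ℝ (vdiv h) x :=
    (hasFDerivAt_vdiv hh.contDiffAt.differentiableAt_fderiv).differentiableAt
  have hlap : vdiv (gradient u) x = 0 := harm x hx
  have hlap_deriv : fderiv ℝ (vdiv (gradient u)) x = 0 := by
    have : vdiv (gradient u) =ᶠ[nhds x] fun _ => 0 :=
      Filter.eventually_of_mem (hΩ.mem_nhds hx) harm
    rw [this.fderiv_eq, fderiv_const_apply]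
  have hA : (fun y => Amat h y (gradient u y)) = fun y =>
      gradient (fun z => ⟪h z, gradient u z⟫) y + lieBracket ℝ (gradient u) h y -
        vdiv h y • gradient u y :=
    funext fun y => Amat_apply_gradient (hh.differentiable (by norm_num) y)
      (hu.contDiffAt.of_le (by norm_num))
  rw [hA, vdiv_sub (hgradF.fun_add hlie) (hdivh.fun_smul hgx), vdiv_add hgradF hlie,
    vdiv_lieBracket hg.contDiffAt hh.contDiffAt, vdiv_smul hdivh hgx, hlap, hlap_deriv, zero_apply,
    mul_zero, sub_zero, zero_add, add_sub_cancel_right]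
  rfl
end
end

section
/- Let M be a d×d real matrix and let n ∈ ℝ^d be a unit vector. Then the matrix-valued function C : t ↦ det(I + tM) · ‖((I + tM)⁻¹)ᵀ n‖ · (I + tM)⁻¹ ((I + tM)⁻¹)ᵀ (defined for all t small enough that I + tM is invertible) has derivative at t = 0 equal to C'(0) = (tr M − ⟨M n, n⟩) I − (M + Mᵀ). (With M = Dh(x) the Jacobian of a C¹ deformation field h at a boundary point x with unit normal n, this is the derivative of C(t) = γ_τ(t) D(T_t⁻¹) (D(T_t⁻¹))ᵀ for the perturbation T_t = Id + t h, and tr M − ⟨M n, n⟩ equals the tangential divergence div_τ h(x).) -/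
/-!
At `t = 0` the three factors `det (1 + tM)`, `‖(1 + tM)⁻ᵀ n‖` and `(1 + tM)⁻¹ (1 + tM)⁻ᵀ` of `C(t)`
equal `1`, `‖n‖ = 1` and `1`, and their derivatives are `tr M` (Jacobi's formula),
`-⟨Mᵀ n, n⟩ / ‖n‖ = -⟨M n, n⟩` and `-(M + Mᵀ)` (since `(A⁻¹)' = -A⁻¹ A' A⁻¹`).
The product rule then gives `C'(0)`.
-/

open scoped RealInnerProductSpace
open Matrix

noncomputable section

/-- `C(t) = det(I + tM) · ‖((I + tM)⁻¹)ᵀ n‖ · (I + tM)⁻¹ ((I + tM)⁻¹)ᵀ`. -/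
def Cmat {d : ℕ} (M : Matrix (Fin d) (Fin d) ℝ) (n : EuclideanSpace ℝ (Fin d)) (t : ℝ) :
    Matrix (Fin d) (Fin d) ℝ :=
  (((1 : Matrix (Fin d) (Fin d) ℝ) + t • M).det *
      ‖Matrix.toEuclideanLin ((((1 : Matrix (Fin d) (Fin d) ℝ) + t • M)⁻¹)ᵀ) n‖) •
    (((1 : Matrix (Fin d) (Fin d) ℝ) + t • M)⁻¹ *
      (((1 : Matrix (Fin d) (Fin d) ℝ) + t • M)⁻¹)ᵀ)

theorem HasDerivAt.norm {F : Type*} [NormedAddCommGroup F] [InnerProductSpace ℝ F]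
    {f : ℝ → F} {f' : F} {x : ℝ} (hf : HasDerivAt f f' x) (h0 : f x ≠ 0) :
    HasDerivAt (fun t => ‖f t‖) (⟪f x, f'⟫ / ‖f x‖) x := by
  have h := hf.norm_sq.sqrt (by positivity)
  simp only [Real.sqrt_sq (norm_nonneg _)] at h
  convert h using 1
  field_simp

theorem LinearMap.hasDerivAt_comp {𝕜 E F : Type*} [NontriviallyNormedField 𝕜] [CompleteSpace 𝕜]
    [NormedAddCommGroup E] [NormedSpace 𝕜 E] [FiniteDimensional 𝕜 E] [NormedAddCommGroup F]
    [NormedSpace 𝕜 F] (L : E →ₗ[𝕜] F) {f : 𝕜 → E} {f' : E} {x : 𝕜} (hf : HasDerivAt f f' x) :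
    HasDerivAt (fun t => L (f t)) (L f') x :=
  L.toContinuousLinearMap.hasFDerivAt.comp_hasDerivAt x hf

theorem hasDerivAt_ringInverse_one_add_smul {𝕜 R : Type*} [NontriviallyNormedField 𝕜]
    [NormedRing R] [NormedAlgebra 𝕜 R] [CompleteSpace R] (a : R) :
    HasDerivAt (fun t : 𝕜 => Ring.inverse (1 + t • a)) (-a) 0 := by
  have hlin : HasDerivAt (fun t : 𝕜 => 1 + t • a) a 0 := by
    simpa using ((hasDerivAt_id (0 : 𝕜)).smul_const a).const_add 1
  have hinv : HasFDerivAt Ring.inverse (-ContinuousLinearMap.mulLeftRight 𝕜 R 1 1)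
      (1 + (0 : 𝕜) • a) := by
    simpa using hasFDerivAt_ringInverse (𝕜 := 𝕜) (1 : Rˣ)
  simpa [Function.comp_def] using hinv.comp_hasDerivAt (0 : 𝕜) hlin

open Polynomial in
theorem Matrix.hasDerivAt_det_one_add_smul {𝕜 ι : Type*} [NontriviallyNormedField 𝕜]
    [Fintype ι] [DecidableEq ι] (M : Matrix ι ι 𝕜) :
    HasDerivAt (fun t : 𝕜 => (1 + t • M).det) M.trace 0 := by
  have h := (det (1 + (X : 𝕜[X]) • M.map C)).hasDerivAt 0
  rw [derivative_det_one_add_X_smul] at h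
  convert h using 1
  ext t
  simp [eval_det, ← smul_eq_mul_diagonal]

theorem Matrix.inner_toEuclideanLin_transpose {ι : Type*} [Fintype ι] [DecidableEq ι]
    (M : Matrix ι ι ℝ) (x y : EuclideanSpace ℝ ι) :
    ⟪x, Mᵀ.toEuclideanLin y⟫ = ⟪M.toEuclideanLin x, y⟫ := by
  rw [← conjTranspose_eq_transpose_of_trivial, toEuclideanLin_conjTranspose_eq_adjoint,
    LinearMap.adjoint_inner_right]

section MatrixCalculus

-- Any norm would do for an entrywise statement; the `L∞` operator norm makes matrices a normed
-- algebra, as the derivative of inversion requires.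
attribute [local instance] Matrix.linftyOpNormedAddCommGroup Matrix.linftyOpNormedSpace
  Matrix.linftyOpNormedRing Matrix.linftyOpNormedAlgebra

variable {𝕜 : Type*} [RCLike 𝕜]

theorem HasDerivAt.matrix_apply {m ι : Type*} [Fintype m] [Fintype ι] {f : 𝕜 → Matrix m ι 𝕜}
    {f' : Matrix m ι 𝕜} {x : 𝕜} (hf : HasDerivAt f f' x) (i : m) (j : ι) :
    HasDerivAt (fun t => f t i j) (f' i j) x :=
  (entryLinearMap 𝕜 𝕜 i j).hasDerivAt_comp (f := f) hf

theorem HasDerivAt.matrix_transpose {m ι : Type*} [Fintype m] [Fintype ι] {f : 𝕜 → Matrix m ι 𝕜}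
    {f' : Matrix m ι 𝕜} {x : 𝕜} (hf : HasDerivAt f f' x) :
    HasDerivAt (fun t => (f t)ᵀ) f'ᵀ x :=
  (transposeLinearEquiv m ι 𝕜 𝕜).toLinearMap.hasDerivAt_comp (f := f) hf

theorem Matrix.hasDerivAt_inv_one_add_smul {ι : Type*} [Fintype ι] [DecidableEq ι]
    (M : Matrix ι ι 𝕜) : HasDerivAt (fun t : 𝕜 => (1 + t • M)⁻¹) (-M) 0 := by
  simp only [nonsing_inv_eq_ringInverse]
  exact hasDerivAt_ringInverse_one_add_smul M

theorem hasDerivAt_Cmat_zero {d : ℕ} (M : Matrix (Fin d) (Fin d) ℝ) (n : EuclideanSpace ℝ (Fin d))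
    (hn : ‖n‖ = 1) :
    HasDerivAt (Cmat M n) ((M.trace - ⟪M.toEuclideanLin n, n⟫) • 1 - (M + Mᵀ)) 0 := by
  have hinv := M.hasDerivAt_inv_one_add_smul
  have hinvT := hinv.matrix_transpose
  have hv : HasDerivAt (fun t : ℝ => ((1 + t • M)⁻¹)ᵀ.toEuclideanLin n)
      ((-M)ᵀ.toEuclideanLin n) 0 :=
    ((LinearMap.applyₗ n).comp toEuclideanLin.toLinearMap).hasDerivAt_comp hinvT
  have hnorm := hv.norm (norm_ne_zero_iff.mp (by simp [hn]))
  refine ((M.hasDerivAt_det_one_add_smul.fun_mul hnorm).fun_smul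
    (hinv.fun_mul hinvT)).congr_deriv ?_
  simp only [zero_smul, add_zero, inv_one, transpose_one, det_one, toLpLin_one, LinearMap.id_coe,
    id_eq, hn, transpose_neg, map_neg, LinearMap.neg_apply, inner_neg_right,
    inner_toEuclideanLin_transpose, mul_one, one_mul, div_one]
  module

end MatrixCalculus

/-- Entrywise derivative at `t = 0`: `C'(0) = (tr M − ⟨M n, n⟩) I − (M + Mᵀ)`. -/
theorem statement5 {d : ℕ} (M : Matrix (Fin d) (Fin d) ℝ)
    (n : EuclideanSpace ℝ (Fin d)) (hn : ‖n‖ = 1) (k l : Fin d) :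
    HasDerivAt (fun t : ℝ => Cmat M n t k l)
      (((M.trace - ⟪Matrix.toEuclideanLin M n, n⟫) • (1 : Matrix (Fin d) (Fin d) ℝ)
          - (M + Mᵀ)) k l)
      0 :=
  (hasDerivAt_Cmat_zero M n hn).matrix_apply k l
end
end
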